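/- Let q be a prime power, let Q ⊆ F_q^{k×n1} be a set of N3 matrices such that rank(A − B) ≥ d2 for all distinct A, B ∈ Q, and let U be an SC-representation of an (n2, N4, d1, k)_q constant dimension code. Then W2 = { rowspace(Q | U) : Q ∈ Q, U ∈ U } is an (n1 + n2, N3·N4, min{d1, 2·d2}, k)_q constant dimension code; in particular the N3·N4 row spaces rowspace(Q | U) are pairwise distinct and have pairwise subspace distance at least min{d1, 2·d2}. -/

import Mathlib

open Module

/-- The row space of a matrix: the subspace spanned by its rows. -/
noncomputable def rowSpace {F : Type*} [Field F] {k n : ℕ} (M : Matrix (Fin k) (Fin n) F) :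
    Submodule F (Fin n → F) := LinearMap.range M.vecMulLinear

/-- The subspace distance `d_S(U, W) = dim(U + W) − dim(U ∩ W)`. -/
noncomputable def subspaceDist {F : Type*} [Field F] {n : ℕ}
    (U W : Submodule F (Fin n → F)) : ℕ :=
  finrank F ↥(U ⊔ W) - finrank F ↥(U ⊓ W)

/-- Horizontal concatenation `(A | B)` of two matrices with the same number of rows. -/
def hcat {F : Type*} {k n1 n2 : ℕ} (A : Matrix (Fin k) (Fin n1) F)
    (B : Matrix (Fin k) (Fin n2) F) : Matrix (Fin k) (Fin (n1 + n2)) F :=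
  Matrix.of fun i => Fin.append (A i) (B i)

/-- `S` is an SC-representation of an `(n, N, d, k)_q` constant dimension code: a set of `N`
full-rank `k×n` matrices whose row spaces are pairwise distinct and have pairwise subspace
distance at least `d`. -/
def IsSCRepOfCDC {F : Type*} [Field F] {k n : ℕ}
    (S : Finset (Matrix (Fin k) (Fin n) F)) (N d : ℕ) : Prop :=
  S.card = N ∧ (∀ M ∈ S, M.rank = k) ∧
  (∀ M1 ∈ S, ∀ M2 ∈ S, M1 ≠ M2 → rowSpace M1 ≠ rowSpace M2) ∧
  (∀ M1 ∈ S, ∀ M2 ∈ S, M1 ≠ M2 → d ≤ subspaceDist (rowSpace M1) (rowSpace M2))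

/-! Write `W i = rowSpace (Q i | U i)`. As `U i` has full rank, the projection onto the last `n2`
coordinates is injective on `W i` and maps it onto `rowSpace (U i)`; hence `dim W i = k`, and
`W 1 ⊓ W 2` embeds into `rowSpace (U 1) ⊓ rowSpace (U 2)`, so `d_S(U 1, U 2) ≤ d_S(W 1, W 2)`.
If `U 1 = U 2 = U`, an equality `v (Q 1 | U) = w (Q 2 | U)` forces `v = w` and `v (Q 1 - Q 2) = 0`,
so `W 1 ⊓ W 2 ≅ ker (Q 1 - Q 2)` and `d_S(W 1, W 2) = 2 rank (Q 1 - Q 2)`. -/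

theorem Fin.append_eq_append_iff {α : Type*} {m n : ℕ} {a c : Fin m → α} {b d : Fin n → α} :
    Fin.append a b = Fin.append c d ↔ a = c ∧ b = d := by
  refine ⟨fun h => ⟨funext fun i => ?_, funext fun i => ?_⟩, fun ⟨hac, hbd⟩ => hac ▸ hbd ▸ rfl⟩
  · simpa using congrFun h (Fin.castAdd n i)
  · simpa using congrFun h (Fin.natAdd m i)

theorem Submodule.finrank_map_of_disjoint_ker {K V W : Type*} [DivisionRing K]
    [AddCommGroup V] [Module K V] [AddCommGroup W] [Module K W]
    (f : V →ₗ[K] W) {S : Submodule K V} (hS : Disjoint S (LinearMap.ker f)) :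
    finrank K (S.map f) = finrank K S := by
  rw [← LinearMap.range_domRestrict]
  exact LinearMap.finrank_range_of_inj (LinearMap.injective_domRestrict_iff.mpr hS)

theorem Submodule.finrank_inf_le_finrank_map_inf {K V W : Type*} [DivisionRing K]
    [AddCommGroup V] [Module K V] [AddCommGroup W] [Module K W] [FiniteDimensional K W]
    (f : V →ₗ[K] W) {S T : Submodule K V} (hS : Disjoint S (LinearMap.ker f)) :
    finrank K ↥(S ⊓ T) ≤ finrank K ↥(S.map f ⊓ T.map f) := by
  rw [← Submodule.finrank_map_of_disjoint_ker f (hS.mono_left inf_le_left)]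
  exact Submodule.finrank_mono (Submodule.map_inf_le f)

section

open Matrix

variable {F : Type*} [Field F] {k n n1 n2 : ℕ}

theorem subspaceDist_eq_of_finrank_eq {U W : Submodule F (Fin n → F)}
    (hU : finrank F U = k) (hW : finrank F W = k) :
    subspaceDist U W = 2 * (k - finrank F ↥(U ⊓ W)) := by
  have hsum := Submodule.finrank_sup_add_finrank_inf_eq U W
  have hinf : finrank F ↥(U ⊓ W) ≤ finrank F U := Submodule.finrank_mono inf_le_left
  unfold subspaceDist
  omega

theorem subspaceDist_self (W : Submodule F (Fin n → F)) : subspaceDist W W = 0 := by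
  rw [subspaceDist, sup_idem, inf_idem, Nat.sub_self]

namespace Matrix

theorem rank_add_finrank_ker_vecMulLinear (M : Matrix (Fin k) (Fin n) F) :
    M.rank + finrank F (LinearMap.ker M.vecMulLinear) = k := by
  rw [← rank_transpose, rank, mulVecLin_transpose, LinearMap.finrank_range_add_finrank_ker,
    finrank_fin_fun]

theorem vecMulLinear_injective_of_rank_eq {M : Matrix (Fin k) (Fin n) F} (hM : M.rank = k) :
    Function.Injective M.vecMulLinear := by
  have hker := rank_add_finrank_ker_vecMulLinear M
  rw [← LinearMap.ker_eq_bot, ← Submodule.finrank_eq_zero]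
  omega

theorem rank_ne_zero_of_ne_zero {M : Matrix (Fin k) (Fin n) F} (hM : M ≠ 0) : M.rank ≠ 0 := by
  rw [Ne, rank, Submodule.finrank_eq_zero, LinearMap.range_eq_bot, ← toLin'_apply',
    LinearEquiv.map_eq_zero_iff]
  exact hM

end Matrix

theorem finrank_rowSpace (M : Matrix (Fin k) (Fin n) F) : finrank F (rowSpace M) = M.rank := by
  rw [rowSpace, ← mulVecLin_transpose, ← rank, rank_transpose]

theorem vecMul_hcat (A : Matrix (Fin k) (Fin n1) F) (B : Matrix (Fin k) (Fin n2) F)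
    (v : Fin k → F) : v ᵥ* hcat A B = Fin.append (v ᵥ* A) (v ᵥ* B) := by
  funext j
  refine Fin.addCases (fun j => ?_) (fun j => ?_) j <;>
    simp [hcat, vecMul, dotProduct]

theorem funLeft_natAdd_comp_vecMulLinear_hcat (A : Matrix (Fin k) (Fin n1) F)
    (B : Matrix (Fin k) (Fin n2) F) :
    (LinearMap.funLeft F F (Fin.natAdd n1)).comp (hcat A B).vecMulLinear = B.vecMulLinear := by
  refine LinearMap.ext fun v => funext fun j => ?_
  simp [vecMul_hcat]

theorem map_funLeft_natAdd_rowSpace_hcat (A : Matrix (Fin k) (Fin n1) F)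
    (B : Matrix (Fin k) (Fin n2) F) :
    (rowSpace (hcat A B)).map (LinearMap.funLeft F F (Fin.natAdd n1)) = rowSpace B := by
  rw [rowSpace, rowSpace, ← LinearMap.range_comp, funLeft_natAdd_comp_vecMulLinear_hcat]

theorem vecMulLinear_hcat_injective (A : Matrix (Fin k) (Fin n1) F)
    {B : Matrix (Fin k) (Fin n2) F} (hB : B.rank = k) :
    Function.Injective (hcat A B).vecMulLinear := by
  refine Function.Injective.of_comp (f := LinearMap.funLeft F F (Fin.natAdd n1)) ?_
  rw [← LinearMap.coe_comp, funLeft_natAdd_comp_vecMulLinear_hcat]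
  exact vecMulLinear_injective_of_rank_eq hB

theorem disjoint_rowSpace_hcat_ker_funLeft_natAdd (A : Matrix (Fin k) (Fin n1) F)
    {B : Matrix (Fin k) (Fin n2) F} (hB : B.rank = k) :
    Disjoint (rowSpace (hcat A B)) (LinearMap.ker (LinearMap.funLeft F F (Fin.natAdd n1))) := by
  rw [Submodule.disjoint_def]
  rintro _ ⟨v, rfl⟩ hv
  have hv0 : B.vecMulLinear v = 0 := by
    rw [← funLeft_natAdd_comp_vecMulLinear_hcat A, LinearMap.comp_apply]
    exact hv
  rw [(map_eq_zero_iff _ (vecMulLinear_injective_of_rank_eq hB)).mp hv0, map_zero]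

theorem finrank_rowSpace_hcat (A : Matrix (Fin k) (Fin n1) F)
    {B : Matrix (Fin k) (Fin n2) F} (hB : B.rank = k) :
    finrank F (rowSpace (hcat A B)) = k := by
  rw [rowSpace, LinearMap.finrank_range_of_inj (vecMulLinear_hcat_injective A hB), finrank_fin_fun]

theorem rowSpace_hcat_ne_of_rowSpace_ne (Q1 Q2 : Matrix (Fin k) (Fin n1) F)
    {U1 U2 : Matrix (Fin k) (Fin n2) F} (h : rowSpace U1 ≠ rowSpace U2) :
    rowSpace (hcat Q1 U1) ≠ rowSpace (hcat Q2 U2) := fun heq => h <| by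
  rw [← map_funLeft_natAdd_rowSpace_hcat Q1 U1, ← map_funLeft_natAdd_rowSpace_hcat Q2 U2, heq]

theorem subspaceDist_rowSpace_le_subspaceDist_rowSpace_hcat (Q1 Q2 : Matrix (Fin k) (Fin n1) F)
    {U1 U2 : Matrix (Fin k) (Fin n2) F} (hU1 : U1.rank = k) (hU2 : U2.rank = k) :
    subspaceDist (rowSpace U1) (rowSpace U2) ≤
      subspaceDist (rowSpace (hcat Q1 U1)) (rowSpace (hcat Q2 U2)) := by
  have hinf := Submodule.finrank_inf_le_finrank_map_inf (T := rowSpace (hcat Q2 U2)) _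
    (disjoint_rowSpace_hcat_ker_funLeft_natAdd Q1 hU1)
  rw [map_funLeft_natAdd_rowSpace_hcat, map_funLeft_natAdd_rowSpace_hcat] at hinf
  rw [subspaceDist_eq_of_finrank_eq (finrank_rowSpace_hcat Q1 hU1) (finrank_rowSpace_hcat Q2 hU2),
    subspaceDist_eq_of_finrank_eq ((finrank_rowSpace U1).trans hU1)
      ((finrank_rowSpace U2).trans hU2)]
  omega

theorem rowSpace_hcat_inf_rowSpace_hcat (Q1 Q2 : Matrix (Fin k) (Fin n1) F)
    {U : Matrix (Fin k) (Fin n2) F} (hU : U.rank = k) :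
    rowSpace (hcat Q1 U) ⊓ rowSpace (hcat Q2 U) =
      (LinearMap.ker (Q1 - Q2).vecMulLinear).map (hcat Q1 U).vecMulLinear := by
  ext x
  constructor
  · rintro ⟨⟨v, rfl⟩, ⟨w, hw⟩⟩
    simp only [vecMulLinear_apply, vecMul_hcat, Fin.append_eq_append_iff] at hw
    obtain rfl : w = v := vecMulLinear_injective_of_rank_eq hU hw.2
    exact ⟨w, by simp [hw.1], rfl⟩
  · rintro ⟨v, hv, rfl⟩
    have hQ : v ᵥ* Q2 = v ᵥ* Q1 := by
      simpa [vecMul_sub, sub_eq_zero, eq_comm] using hv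
    exact ⟨⟨v, rfl⟩, ⟨v, by simp [vecMul_hcat, hQ]⟩⟩

theorem subspaceDist_rowSpace_hcat_of_right_eq (Q1 Q2 : Matrix (Fin k) (Fin n1) F)
    {U : Matrix (Fin k) (Fin n2) F} (hU : U.rank = k) :
    subspaceDist (rowSpace (hcat Q1 U)) (rowSpace (hcat Q2 U)) = 2 * (Q1 - Q2).rank := by
  have hker := rank_add_finrank_ker_vecMulLinear (Q1 - Q2)
  rw [subspaceDist_eq_of_finrank_eq (finrank_rowSpace_hcat Q1 hU) (finrank_rowSpace_hcat Q2 hU),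
    rowSpace_hcat_inf_rowSpace_hcat Q1 Q2 hU,
    ← (Submodule.equivMapOfInjective _ (vecMulLinear_hcat_injective Q1 hU) _).finrank_eq]
  omega

theorem rowSpace_hcat_ne_of_ne {Q1 Q2 : Matrix (Fin k) (Fin n1) F}
    {U : Matrix (Fin k) (Fin n2) F} (hU : U.rank = k) (h : Q1 ≠ Q2) :
    rowSpace (hcat Q1 U) ≠ rowSpace (hcat Q2 U) := by
  intro heq
  have hdist := subspaceDist_rowSpace_hcat_of_right_eq Q1 Q2 hU
  rw [heq, subspaceDist_self] at hdist
  exact rank_ne_zero_of_ne_zero (sub_ne_zero.mpr h) (by omega)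

theorem rowSpace_hcat_ne_and_min_le_subspaceDist {𝒬 : Finset (Matrix (Fin k) (Fin n1) F)}
    {𝒰 : Finset (Matrix (Fin k) (Fin n2) F)} {N d1 d2 : ℕ}
    (h𝒬dist : ∀ A ∈ 𝒬, ∀ B ∈ 𝒬, A ≠ B → d2 ≤ (A - B).rank) (h𝒰 : IsSCRepOfCDC 𝒰 N d1)
    {Q1 Q2 : Matrix (Fin k) (Fin n1) F} {U1 U2 : Matrix (Fin k) (Fin n2) F}
    (hQ1 : Q1 ∈ 𝒬) (hU1 : U1 ∈ 𝒰) (hQ2 : Q2 ∈ 𝒬) (hU2 : U2 ∈ 𝒰)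
    (hne : (Q1, U1) ≠ (Q2, U2)) :
    rowSpace (hcat Q1 U1) ≠ rowSpace (hcat Q2 U2) ∧
      min d1 (2 * d2) ≤ subspaceDist (rowSpace (hcat Q1 U1)) (rowSpace (hcat Q2 U2)) := by
  obtain ⟨-, hrank, hrowSpace_ne, hdist⟩ := h𝒰
  by_cases hU : U1 = U2
  · subst hU
    have hQ : Q1 ≠ Q2 := fun h => hne (h ▸ rfl)
    refine ⟨rowSpace_hcat_ne_of_ne (hrank U1 hU1) hQ, ?_⟩
    rw [subspaceDist_rowSpace_hcat_of_right_eq Q1 Q2 (hrank U1 hU1)]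
    exact min_le_of_right_le (Nat.mul_le_mul_left 2 (h𝒬dist Q1 hQ1 Q2 hQ2 hQ))
  · refine ⟨rowSpace_hcat_ne_of_rowSpace_ne Q1 Q2 (hrowSpace_ne U1 hU1 U2 hU2 hU), ?_⟩
    exact min_le_of_left_le ((hdist U1 hU1 U2 hU2 hU).trans
      (subspaceDist_rowSpace_le_subspaceDist_rowSpace_hcat Q1 Q2 (hrank U1 hU1) (hrank U2 hU2)))

end

theorem parallel_linkage_construction_general (k n1 n2 N3 N4 d1 d2 : ℕ)
    (F : Type*) [Field F]
    (𝒬 : Finset (Matrix (Fin k) (Fin n1) F)) (h𝒬card : 𝒬.card = N3)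
    (h𝒬dist : ∀ A ∈ 𝒬, ∀ B ∈ 𝒬, A ≠ B → d2 ≤ (A - B).rank)
    (𝒰 : Finset (Matrix (Fin k) (Fin n2) F)) (h𝒰 : IsSCRepOfCDC 𝒰 N4 d1) :
    (∀ Q ∈ 𝒬, ∀ U ∈ 𝒰, finrank F ↥(rowSpace (hcat Q U)) = k) ∧
    ((@Finset.image _ _ (Classical.decEq _)
      (fun p : Matrix (Fin k) (Fin n1) F × Matrix (Fin k) (Fin n2) F =>
        rowSpace (hcat p.1 p.2)) (𝒬 ×ˢ 𝒰)).card = N3 * N4) ∧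
    (∀ Q1 ∈ 𝒬, ∀ U1 ∈ 𝒰, ∀ Q2 ∈ 𝒬, ∀ U2 ∈ 𝒰, (Q1, U1) ≠ (Q2, U2) →
      rowSpace (hcat Q1 U1) ≠ rowSpace (hcat Q2 U2) ∧
      min d1 (2 * d2) ≤ subspaceDist (rowSpace (hcat Q1 U1)) (rowSpace (hcat Q2 U2))) := by
  have hcode := fun Q1 (hQ1 : Q1 ∈ 𝒬) U1 (hU1 : U1 ∈ 𝒰) Q2 (hQ2 : Q2 ∈ 𝒬) U2 (hU2 : U2 ∈ 𝒰) =>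
    rowSpace_hcat_ne_and_min_le_subspaceDist h𝒬dist h𝒰 hQ1 hU1 hQ2 hU2
  refine ⟨fun Q _ U hU => finrank_rowSpace_hcat Q (h𝒰.2.1 U hU), ?_, hcode⟩
  rw [Finset.card_image_of_injOn, Finset.card_product, h𝒬card, h𝒰.1]
  rintro ⟨Q1, U1⟩ h1 ⟨Q2, U2⟩ h2 heq
  rw [Finset.coe_product, Set.mem_prod] at h1 h2
  by_contra hne
  exact (hcode Q1 h1.1 U1 h1.2 Q2 h2.1 U2 h2.2 hne).1 heq

/-- The parallel linkage construction: from a rank-metric code `𝒬 ⊆ F_q^{k×n1}` of size `N3`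
with minimum rank distance `d2` and an SC-representation `𝒰` of an `(n2, N4, d1, k)_q` CDC,
the set `W2 = { rowspace(Q | U) : Q ∈ 𝒬, U ∈ 𝒰 }` is an
`(n1 + n2, N3·N4, min{d1, 2·d2}, k)_q` constant dimension code. -/
theorem parallel_linkage_construction (q k n1 n2 N3 N4 d1 d2 : ℕ) (hq : IsPrimePow q)
    (F : Type*) [Field F] [Fintype F] (hcard : Fintype.card F = q)
    (𝒬 : Finset (Matrix (Fin k) (Fin n1) F)) (h𝒬card : 𝒬.card = N3)
    (h𝒬dist : ∀ A ∈ 𝒬, ∀ B ∈ 𝒬, A ≠ B → d2 ≤ (A - B).rank)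
    (𝒰 : Finset (Matrix (Fin k) (Fin n2) F)) (h𝒰 : IsSCRepOfCDC 𝒰 N4 d1) :
    (∀ Q ∈ 𝒬, ∀ U ∈ 𝒰, finrank F ↥(rowSpace (hcat Q U)) = k) ∧
    ((@Finset.image _ _ (Classical.decEq _)
      (fun p : Matrix (Fin k) (Fin n1) F × Matrix (Fin k) (Fin n2) F =>
        rowSpace (hcat p.1 p.2)) (𝒬 ×ˢ 𝒰)).card = N3 * N4) ∧
    (∀ Q1 ∈ 𝒬, ∀ U1 ∈ 𝒰, ∀ Q2 ∈ 𝒬, ∀ U2 ∈ 𝒰, (Q1, U1) ≠ (Q2, U2) →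
      rowSpace (hcat Q1 U1) ≠ rowSpace (hcat Q2 U2) ∧
      min d1 (2 * d2) ≤ subspaceDist (rowSpace (hcat Q1 U1)) (rowSpace (hcat Q2 U2))) :=
  parallel_linkage_construction_general k n1 n2 N3 N4 d1 d2 F 𝒬 h𝒬card h𝒬dist 𝒰 h𝒰
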